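/- For every fixed k ≥ 1, the predictive information converges to the sub-extensive part of the block entropy as the future window grows: lim_{k'→∞} I_pred(k,k') = H₁(k). -/

import Mathlib

/-!
Concavity makes the learning curve `Λ(n) = H₁(n+1) − H₁(n)` nonincreasing, so
`n Λ(n) ≤ H₁(n)`; sublinearity of `H₁` and `Λ ≥ 0` then force `Λ(n) → 0`. Since
`I_pred(k,k') = H₁(k) − (Λ(k') + ⋯ + Λ(k'+k−1))`, the claim follows.
-/

open Filter Topology

/-- Block entropy: extensive part plus sub-extensive part. -/
noncomputable def blockEntropy (ℓ₀ : ℝ) (H₁ : ℕ → ℝ) (n : ℕ) : ℝ := n * ℓ₀ + H₁ n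

/-- Predictive information `I_pred(k,k') = H(k) + H(k') − H(k+k')`. -/
noncomputable def Ipred (ℓ₀ : ℝ) (H₁ : ℕ → ℝ) (k k' : ℕ) : ℝ :=
  blockEntropy ℓ₀ H₁ k + blockEntropy ℓ₀ H₁ k' - blockEntropy ℓ₀ H₁ (k + k')

def learningCurve (f : ℕ → ℝ) (n : ℕ) : ℝ := f (n + 1) - f n

section LearningCurve

variable {f : ℕ → ℝ}

theorem learningCurve_antitone (hconcave : ∀ n, f (n + 2) - f (n + 1) ≤ f (n + 1) - f n) :
    Antitone (learningCurve f) :=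
  antitone_nat_of_succ_le hconcave

theorem learningCurve_nonneg (hmono : Monotone f) (n : ℕ) : 0 ≤ learningCurve f n :=
  sub_nonneg.mpr (hmono n.le_succ)

theorem sum_learningCurve_shift (n k : ℕ) :
    ∑ i ∈ Finset.range k, learningCurve f (n + i) = f (n + k) - f n :=
  Finset.sum_range_sub (fun i => f (n + i)) k

theorem natCast_mul_learningCurve_le (hΛ : Antitone (learningCurve f)) (n : ℕ) :
    n * learningCurve f n ≤ f n - f 0 :=
  calc (n : ℝ) * learningCurve f n = ∑ _i ∈ Finset.range n, learningCurve f n := by simp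
    _ ≤ ∑ i ∈ Finset.range n, learningCurve f i :=
      Finset.sum_le_sum fun i hi => hΛ (Finset.mem_range.mp hi).le
    _ = f n - f 0 := by simpa using sum_learningCurve_shift (f := f) 0 n

theorem tendsto_learningCurve_zero (h0 : f 0 = 0) (hmono : Monotone f)
    (hΛ : Antitone (learningCurve f)) (hsublin : Tendsto (fun n : ℕ => f n / n) atTop (𝓝 0)) :
    Tendsto (learningCurve f) atTop (𝓝 0) := by
  refine squeeze_zero' (.of_forall (learningCurve_nonneg hmono)) ?_ hsublin
  filter_upwards [eventually_gt_atTop 0] with n hn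
  rw [le_div_iff₀ (by exact_mod_cast hn), mul_comm]
  simpa [h0] using natCast_mul_learningCurve_le hΛ n

theorem tendsto_sub_shift_zero (hΛ : Tendsto (learningCurve f) atTop (𝓝 0)) (k : ℕ) :
    Tendsto (fun n => f (n + k) - f n) atTop (𝓝 0) := by
  simp_rw [← sum_learningCurve_shift]
  simpa using tendsto_finsetSum (Finset.range k) fun i _ => hΛ.comp (tendsto_add_atTop_nat i)

end LearningCurve

theorem Ipred_eq_sub (ℓ₀ : ℝ) (H₁ : ℕ → ℝ) (k k' : ℕ) :
    Ipred ℓ₀ H₁ k k' = H₁ k - (H₁ (k' + k) - H₁ k') := by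
  simp only [Ipred, blockEntropy, add_comm k k']
  push_cast
  ring

theorem Ipred_tendsto_subextensive_general
    (ℓ₀ : ℝ) (H₁ : ℕ → ℝ)
    (h0 : H₁ 0 = 0)
    (hmono : Monotone H₁)
    (hconcave : ∀ n, H₁ (n + 2) - H₁ (n + 1) ≤ H₁ (n + 1) - H₁ n)
    (hsublin : Tendsto (fun n : ℕ => H₁ n / n) atTop (𝓝 0))
    (k : ℕ) :
    Tendsto (fun k' : ℕ => Ipred ℓ₀ H₁ k k') atTop (𝓝 (H₁ k)) := by
  have hΛ := tendsto_learningCurve_zero h0 hmono (learningCurve_antitone hconcave) hsublin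
  simpa [Ipred_eq_sub] using tendsto_const_nhds.sub (tendsto_sub_shift_zero hΛ k)

/-- For every fixed `k ≥ 1`, the predictive information converges to the sub-extensive
part of the block entropy as the future window grows:
`lim_{k'→∞} I_pred(k,k') = H₁(k)`. -/
theorem Ipred_tendsto_subextensive
    (ℓ₀ : ℝ) (H₁ : ℕ → ℝ)
    (h0 : H₁ 0 = 0)
    (hnonneg : ∀ n, 0 ≤ H₁ n)
    (hmono : Monotone H₁)
    (hsubadd : ∀ m n, H₁ (m + n) ≤ H₁ m + H₁ n)
    (hconcave : ∀ n, H₁ (n + 2) - H₁ (n + 1) ≤ H₁ (n + 1) - H₁ n)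
    (hsublin : Tendsto (fun n : ℕ => H₁ n / n) atTop (𝓝 0))
    (k : ℕ) (hk : 1 ≤ k) :
    Tendsto (fun k' : ℕ => Ipred ℓ₀ H₁ k k') atTop (𝓝 (H₁ k)) :=
  Ipred_tendsto_subextensive_general ℓ₀ H₁ h0 hmono hconcave hsublin k
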